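/- Let γ > 0 and 0 < a < 1. The limit as y → 1⁻ of (1/γ)·( log(y/(1−y)) − 2y − log(a/(1−a)) + 2a ) − (e/γ)·∫_a^y e^{-1/z}·z/(1−z) dz exists and is finite; that is, although R(a,y) and (e/γ)·S(a,y) each diverge to +∞ as y → 1⁻, their difference T̄_a(y) = R(a,y) − S(a,y)·K(1) converges to a finite value ('the mean time to decay from full excitation to level a is finite'). -/

import Mathlib

/-- Heterodyne scale density Q(z) = e^{-1/z}·z/(1−z). -/
noncomputable def Qhet (z : ℝ) : ℝ := Real.exp (-1 / z) * z / (1 - z)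

/-- Heterodyne scale integral S(u,v) = ∫_u^v Q(z) dz. -/
noncomputable def Shet (u v : ℝ) : ℝ := ∫ z in u..v, Qhet z

/-- Heterodyne R(u,v) = (1/γ)[log(z/(1−z)) − 2z]_u^v. -/
noncomputable def Rhet (γ u v : ℝ) : ℝ :=
  (1 / γ) * (Real.log (v / (1 - v)) - 2 * v - Real.log (u / (1 - u)) + 2 * u)

/-!
Splitting off the pole of the scale density, `e·Q(z) = 1/(1-z) + φ(z)` with `|φ| ≤ 2`
on `(0,1)`. Hence `(e/γ)·S(a,y) = -(1/γ) log(1-y) + O(1)`, and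
`R(a,y) = (1/γ)(log y - log(1-y) - 2y + c)` has the same logarithmic singularity, so both
diverge while in their difference the logarithms cancel and what remains, `∫_a^y φ` and
`log y - 2y`, is continuous up to `y = 1`.
-/

open Real MeasureTheory Filter Set Topology

noncomputable def qhetRegular (z : ℝ) : ℝ := (exp (1 - 1 / z) * z - 1) / (1 - z)

lemma exp_one_mul_Qhet (z : ℝ) : exp 1 * Qhet z = 1 / (1 - z) + qhetRegular z := by
  rw [Qhet, qhetRegular, ← add_div, sub_eq_add_neg 1 (1 / z), exp_add, neg_div]
  ring

lemma abs_qhetRegular_le {z : ℝ} (h0 : 0 < z) (h1 : z < 1) : |qhetRegular z| ≤ 2 := by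
  have hz : 0 < 1 - z := sub_pos.2 h1
  have hexp_le : exp (1 - 1 / z) ≤ 1 :=
    exp_le_one_iff.2 (by rw [sub_nonpos, le_div_iff₀ h0]; linarith)
  have hexp_ge : 2 - 1 / z ≤ exp (1 - 1 / z) := by linarith [add_one_le_exp (1 - 1 / z)]
  have hz_inv : z * (1 / z) = 1 := by field_simp
  rw [qhetRegular, abs_div, abs_of_pos hz, div_le_iff₀ hz, abs_le]
  constructor <;> nlinarith [mul_le_mul_of_nonneg_left hexp_ge h0.le]

lemma continuousOn_qhetRegular : ContinuousOn qhetRegular (Ioo 0 1) := by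
  intro z hz
  have hz0 : z ≠ 0 := hz.1.ne'
  have hz1 : 1 - z ≠ 0 := (sub_pos.2 hz.2).ne'
  unfold qhetRegular
  fun_prop (disch := assumption)

lemma integrableOn_qhetRegular : IntegrableOn qhetRegular (Icc 0 1) := by
  rw [integrableOn_Icc_iff_integrableOn_Ioo]
  refine Measure.integrableOn_of_bounded (M := 2) measure_Ioo_lt_top.ne
    (Measurable.aestronglyMeasurable (by unfold qhetRegular; fun_prop)) ?_
  filter_upwards [ae_restrict_mem measurableSet_Ioo] with z hz
  exact abs_qhetRegular_le hz.1 hz.2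

lemma continuousWithinAt_primitive_qhetRegular {a : ℝ} (ha : a ∈ Icc 0 1) :
    ContinuousWithinAt (fun y => ∫ z in a..y, qhetRegular z) (Iio 1) 1 := by
  have hint : IntervalIntegrable qhetRegular volume 0 1 :=
    (intervalIntegrable_iff_integrableOn_Icc_of_le zero_le_one).2 integrableOn_qhetRegular
  have hcont : ContinuousOn (fun y => ∫ z in a..y, qhetRegular z) (Icc 0 1) := by
    simpa only [uIcc_of_le zero_le_one] using
      intervalIntegral.continuousOn_primitive_interval' hint (by rwa [uIcc_of_le zero_le_one])
  rw [ContinuousWithinAt, ← nhdsWithin_Ioo_eq_nhdsLT zero_lt_one]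
  exact (hcont 1 (right_mem_Icc.2 zero_le_one)).tendsto.mono_left
    (nhdsWithin_mono _ Ioo_subset_Icc_self)

lemma integral_one_div_one_sub {a b : ℝ} (ha : a < 1) (hb : b < 1) :
    ∫ z in a..b, 1 / (1 - z) = log (1 - a) - log (1 - b) := by
  have h0 : (0 : ℝ) ∉ uIcc (1 - b) (1 - a) := fun h =>
    (lt_min (sub_pos.2 hb) (sub_pos.2 ha)).not_ge (by simpa using h.1)
  rw [intervalIntegral.integral_comp_sub_left (fun x => 1 / x), integral_one_div h0,
    log_div (sub_pos.2 ha).ne' (sub_pos.2 hb).ne']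

lemma exp_one_mul_Shet {a y : ℝ} (ha : a ∈ Ioo 0 1) (hy : y ∈ Ioo 0 1) :
    exp 1 * Shet a y = log (1 - a) - log (1 - y) + ∫ z in a..y, qhetRegular z := by
  have hsub : uIcc a y ⊆ Ioo 0 1 := ordConnected_Ioo.uIcc_subset ha hy
  have hint : IntervalIntegrable (fun z => 1 / (1 - z)) volume a y :=
    ContinuousOn.intervalIntegrable (by
      refine continuousOn_const.div (continuousOn_const.sub continuousOn_id) fun z hz => ?_
      exact (sub_pos.2 (hsub hz).2).ne')
  rw [Shet, ← intervalIntegral.integral_const_mul]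
  simp_rw [exp_one_mul_Qhet]
  rw [intervalIntegral.integral_add hint (continuousOn_qhetRegular.mono hsub).intervalIntegrable,
    integral_one_div_one_sub ha.2 hy.2]

lemma Rhet_eq (γ a : ℝ) {y : ℝ} (hy : y ∈ Ioo 0 1) :
    Rhet γ a y = (1 / γ) * (log y - log (1 - y) - 2 * y - log (a / (1 - a)) + 2 * a) := by
  rw [Rhet, log_div hy.1.ne' (sub_pos.2 hy.2).ne']

lemma tendsto_neg_log_one_sub_nhdsLT_one : Tendsto (fun y => -log (1 - y)) (𝓝[<] 1) atTop := by
  have h : Tendsto (fun y : ℝ => 1 - y) (𝓝[<] 1) (𝓝[>] 0) := by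
    refine tendsto_nhdsWithin_of_tendsto_nhds_of_eventually_within _ ?_ ?_
    · simpa using ((continuous_sub_left (1 : ℝ)).tendsto 1).mono_left nhdsWithin_le_nhds
    · filter_upwards [self_mem_nhdsWithin] with y hy using sub_pos.2 (mem_Iio.1 hy)
  exact tendsto_neg_atBot_atTop.comp (tendsto_log_nhdsGT_zero.comp h)

/-- Although R(a,y) and (e/γ)S(a,y) each diverge to +∞ as y → 1⁻, the mean
first hitting time T̄_a(y) = R(a,y) − S(a,y)·(e/γ) converges to a finite
limit: the mean time to decay from full excitation to level a is finite. -/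
theorem het_mean_hitting_time_finite_at_one (γ a : ℝ) (hγ : 0 < γ)
    (ha0 : 0 < a) (ha1 : a < 1) :
    Filter.Tendsto (fun y => Rhet γ a y) (nhdsWithin 1 (Set.Iio 1))
      Filter.atTop ∧
    Filter.Tendsto (fun y => (Real.exp 1 / γ) * Shet a y)
      (nhdsWithin 1 (Set.Iio 1)) Filter.atTop ∧
    ∃ L : ℝ, Filter.Tendsto (fun y => Rhet γ a y - Shet a y * (Real.exp 1 / γ))
      (nhdsWithin 1 (Set.Iio 1)) (nhds L) := by
  set Φ := fun y => ∫ z in a..y, qhetRegular z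
  have hΦ : Tendsto Φ (𝓝[<] 1) (𝓝 (Φ 1)) :=
    continuousWithinAt_primitive_qhetRegular ⟨ha0.le, ha1.le⟩
  have hlog_sub : Tendsto (fun y => log y - 2 * y) (𝓝[<] 1) (𝓝 (log 1 - 2 * 1)) :=
    ((continuousAt_log one_ne_zero).sub (continuousAt_const.mul continuousAt_id)).tendsto
      |>.mono_left nhdsWithin_le_nhds
  have hnear : ∀ᶠ y in 𝓝[<] (1 : ℝ), y ∈ Ioo 0 1 := Ioo_mem_nhdsLT one_pos
  have hγ' : 0 < 1 / γ := by positivity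
  refine ⟨?_, ?_, ?_⟩
  · refine ((tendsto_neg_log_one_sub_nhdsLT_one.atTop_add
      (hlog_sub.add_const (2 * a - log (a / (1 - a))))).const_mul_atTop hγ').congr' ?_
    filter_upwards [hnear] with y hy
    rw [Rhet_eq γ a hy]
    ring
  · refine ((tendsto_neg_log_one_sub_nhdsLT_one.atTop_add
      (hΦ.const_add (log (1 - a)))).const_mul_atTop hγ').congr' ?_
    filter_upwards [hnear] with y hy
    rw [show exp 1 / γ * Shet a y = 1 / γ * (exp 1 * Shet a y) by ring,
      exp_one_mul_Shet ⟨ha0, ha1⟩ hy]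
    ring
  · refine ⟨_, (((hlog_sub.sub hΦ).add_const
      (2 * a - log (a / (1 - a)) - log (1 - a))).const_mul (1 / γ)).congr' ?_⟩
    filter_upwards [hnear] with y hy
    rw [Rhet_eq γ a hy, show Shet a y * (exp 1 / γ) = 1 / γ * (exp 1 * Shet a y) by ring,
      exp_one_mul_Shet ⟨ha0, ha1⟩ hy]
    ring
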